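/- Let E be a directed graph, x ∈ ∂E a boundary path, and F ⊆ E* a finite set of paths. Let n = max{p : x(0,p) ∈ F} (assuming some initial segment of x lies in F) and F_x := {μ′ ∈ x(n)E* ∖ {x(n)} : x(0,n)μ′ ∈ F}, where x(n) = s(x_n). Then there exists ν ∈ s(x_n)E* such that ν has no common extension with any path in F_x, provided s(x_n)E* ≠ ∅. -/

import Mathlib

structure DirectedGraph where
  V : Type
  E : Type
  r : E → V
  s : E → V

namespace DirectedGraph

variable {G : DirectedGraph}

/-- A finite path: a list of edges `μ₁ … μₙ` with `s μᵢ = r μᵢ₊₁`, together with its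
range vertex (which is the range of the first edge when the path is nonempty, and is
the defining datum of the path when the path has length zero, i.e. is a vertex). -/
structure FinPath (G : DirectedGraph) where
  vtx : G.V
  edges : List G.E
  chain : edges.Chain' fun e f => G.s e = G.r f
  hv : ∀ e ∈ edges.head?, G.r e = vtx

/-- An infinite path `μ₁μ₂…` with `s μᵢ = r μᵢ₊₁`. -/
structure InfPath (G : DirectedGraph) where
  edge : ℕ → G.E
  chain : ∀ n, G.s (edge n) = G.r (edge (n + 1))

/-- The path space `E* ∪ E^∞`. -/
abbrev PathSpace (G : DirectedGraph) := FinPath G ⊕ InfPath G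

namespace FinPath

def length (μ : FinPath G) : ℕ := μ.edges.length

def range (μ : FinPath G) : G.V := μ.vtx

def source (μ : FinPath G) : G.V := (μ.edges.getLast?).elim μ.vtx G.s

/-- A vertex, regarded as a path of length zero. -/
def ofVertex (G : DirectedGraph) (v : G.V) : FinPath G :=
  ⟨v, [], List.isChain_nil, by simp⟩

/-- `μ.Extends ν` means `μ = νν′` for some path `ν′`. -/
def Extends (μ ν : FinPath G) : Prop := μ.vtx = ν.vtx ∧ ν.edges <+: μ.edges

end FinPath

def InfPath.range (x : InfPath G) : G.V := G.r (x.edge 0)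

/-- `x.Extends ν` means the infinite path `x` is of the form `νx′`. -/
def InfPath.Extends (x : InfPath G) (ν : FinPath G) : Prop :=
  (ν.edges = [] → x.range = ν.vtx) ∧
  ∀ i, (h : i < ν.edges.length) → x.edge i = ν.edges.get ⟨i, h⟩

/-- The cylinder set `Z(μ) = {w ∈ E* ∪ E^∞ : w = μw′}`. -/
def Cyl (μ : FinPath G) : Set (PathSpace G) :=
  {w | match w with
       | Sum.inl lam => lam.Extends μ
       | Sum.inr x => x.Extends μ}

/-- The cylinder set `Z(μe)` of the path `μ` followed by the edge `e`. -/
def CylSnoc (μ : FinPath G) (e : G.E) : Set (PathSpace G) :=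
  {w | match w with
       | Sum.inl lam => (μ.edges ++ [e]) <+: lam.edges
       | Sum.inr x => ∀ i, (h : i < (μ.edges ++ [e]).length) →
           x.edge i = (μ.edges ++ [e]).get ⟨i, h⟩}

/-- `Z(μ∖G) := Z(μ) ∖ ⋃_{e ∈ G} Z(μe)`. -/
def CylMinus (μ : FinPath G) (GS : Finset G.E) : Set (PathSpace G) :=
  Cyl μ \ ⋃ e ∈ GS, CylSnoc μ e

/-- The basic sets `Z(μ∖G)` for `μ ∈ E*` and `G ⊆ s(μ)E¹` finite. -/
def basicSets (G : DirectedGraph) : Set (Set (PathSpace G)) :=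
  {S | ∃ (μ : FinPath G) (GS : Finset G.E),
        (∀ e ∈ GS, G.r e = μ.source) ∧ S = CylMinus μ GS}

end DirectedGraph
namespace DirectedGraph

variable {G : DirectedGraph}

/-- E^{≤ n}: paths of length n, together with shorter paths whose source receives no
edges. -/
def ESle (G : DirectedGraph) (n : ℕ) : Set (FinPath G) :=
  {mu | mu.length = n ∨ (mu.length < n ∧ ∀ e : G.E, G.r e ≠ mu.source)}

variable {A : Type*} [NonUnitalCStarAlgebra A]

/-- A Cuntz-Krieger E-family: mutually orthogonal vertex projections and partial
isometries indexed by finite paths, such that paths in E^{≤n} have mutually orthogonal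
range projections, and (CK1)-(CK3) hold. -/
structure IsCKFamily (G : DirectedGraph) (t : FinPath G → A) : Prop where
  vertex_star : ∀ v, star (t (FinPath.ofVertex G v)) = t (FinPath.ofVertex G v)
  vertex_idem : ∀ v,
    t (FinPath.ofVertex G v) * t (FinPath.ofVertex G v) = t (FinPath.ofVertex G v)
  vertex_orth : ∀ v w, v ≠ w → t (FinPath.ofVertex G v) * t (FinPath.ofVertex G w) = 0
  range_orth : ∀ n : ℕ, ∀ mu ∈ ESle G n, ∀ nu ∈ ESle G n, mu ≠ nu →
    (t mu * star (t mu)) * (t nu * star (t nu)) = 0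
  ck1 : ∀ mu, star (t mu) * t mu = t (FinPath.ofVertex G mu.source)
  ck2 : ∀ mu, t (FinPath.ofVertex G mu.range) * (t mu * star (t mu)) = t mu * star (t mu)
  ck3 : ∀ (v : G.V) (n : ℕ) (h : {mu | mu ∈ ESle G n ∧ mu.range = v}.Finite),
    t (FinPath.ofVertex G v) = ∑ mu ∈ h.toFinset, t mu * star (t mu)

open Classical in
/-- The projection q_mu^F = s_mu s_mu^* ∏_{mu mu' ∈ F ∖ {mu}} (s_mu s_mu^* -
s_{mu mu'} s_{mu mu'}^*), the product being taken over the proper extensions of mu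
lying in F. -/
noncomputable def qProj (t : FinPath G → A) (F : Finset (FinPath G))
    (mu : FinPath G) : A :=
  (((F.filter fun lam => lam ≠ mu ∧ lam.Extends mu).toList).map
      fun lam => t mu * star (t mu) - t lam * star (t lam)).foldl
    (fun a b => a * b) (t mu * star (t mu))

/-- The path obtained by deleting the first n edges of lam; the vertex v is used as the
range in the degenerate case where nothing remains. -/
def FinPath.tailAfter (lam : FinPath G) (n : ℕ) (v : G.V) : FinPath G where
  vtx := ((lam.edges.drop n).head?).elim v G.r
  edges := lam.edges.drop n
  chain := lam.chain.suffix (List.drop_suffix n lam.edges)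
  hv := by
    intro e he
    cases h : (lam.edges.drop n).head? with
    | none => rw [h] at he; exact absurd he (by simp)
    | some f =>
        rw [h] at he
        simp only [Option.mem_some_iff] at he
        subst he
        rfl

end DirectedGraph

namespace DirectedGraph

/-- A vertex is singular if it receives no edges or infinitely many edges. -/
def Singular (G : DirectedGraph) (v : G.V) : Prop :=
  G.r ⁻¹' {v} = ∅ ∨ (G.r ⁻¹' {v}).Infinite

/-- The boundary path space: all infinite paths, together with the finite paths whose
source is a singular vertex. -/
def BoundaryPaths (G : DirectedGraph) : Set (PathSpace G) :=
  {w | match w with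
       | Sum.inl mu => Singular G mu.source
       | Sum.inr _ => True}

end DirectedGraph

/-!
A proper extension of `rho` lying in `F` is strictly longer than `rho`, so by maximality the
boundary path `x` does not pass through it. It therefore suffices to find a path `λ = rho ν`
that has no common extension with any path of `F` avoided by `x`; its tail `ν` after `rho` is the
required path. If `x` is infinite, a long enough initial segment of `x` works. If `x` is finite
and `s(x)` receives no edges, take `λ = x`: a proper extension of `x` would start with an edge
into `s(x)`. If `s(x)` receives infinitely many edges, take `λ = xe` for an edge `e` into `s(x)`
occurring in no path of `F`.
-/

namespace DirectedGraph

variable {G : DirectedGraph}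

namespace FinPath

theorem ext {μ ν : FinPath G} (hv : μ.vtx = ν.vtx) (he : μ.edges = ν.edges) : μ = ν := by
  cases μ; cases ν; cases hv; cases he; rfl

def HasCommonExtension (μ ν : FinPath G) : Prop := μ.Extends ν ∨ ν.Extends μ

theorem Extends.refl (μ : FinPath G) : μ.Extends μ := ⟨rfl, List.prefix_refl _⟩

theorem Extends.trans {μ ν ρ : FinPath G} (h₁ : μ.Extends ν) (h₂ : ν.Extends ρ) :
    μ.Extends ρ :=
  ⟨h₁.1.trans h₂.1, h₂.2.trans h₁.2⟩

theorem Extends.eq_of_length_le {μ ν : FinPath G} (h : μ.Extends ν)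
    (hlen : μ.length ≤ ν.length) : μ = ν :=
  ext h.1 (h.2.eq_of_length (le_antisymm h.2.length_le hlen)).symm

theorem vtx_eq_r_head {μ : FinPath G} (h : μ.edges ≠ []) : μ.vtx = G.r (μ.edges.head h) :=
  (μ.hv _ (List.head?_eq_some_head h)).symm

theorem source_eq_s_getLast {μ : FinPath G} (h : μ.edges ≠ []) :
    μ.source = G.s (μ.edges.getLast h) := by
  simp [source, List.getLast?_eq_some_getLast h]

theorem source_of_edges_eq_nil {μ : FinPath G} (h : μ.edges = []) : μ.source = μ.vtx := by
  simp [source, h]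

theorem Extends.r_getElem_length {lam ρ : FinPath G} (h : lam.Extends ρ)
    (hlt : ρ.edges.length < lam.edges.length) :
    G.r lam.edges[ρ.edges.length] = ρ.source := by
  rcases eq_or_ne ρ.edges [] with hρ | hρ
  · have hlam : lam.edges ≠ [] := List.ne_nil_of_length_pos (by omega)
    simp only [hρ, List.length_nil, source_of_edges_eq_nil hρ, ← h.1,
      vtx_eq_r_head hlam, List.head_eq_getElem]
  · have hpos : 0 < ρ.edges.length := List.length_pos_iff.2 hρ
    rw [source_eq_s_getLast hρ, List.getLast_eq_getElem, h.2.getElem]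
    simpa [Nat.sub_add_cancel hpos] using
      (lam.chain.getElem (ρ.edges.length - 1) (by omega)).symm

theorem range_tailAfter {lam ρ : FinPath G} (h : lam.Extends ρ) :
    (lam.tailAfter ρ.edges.length ρ.source).range = ρ.source := by
  simp only [range, tailAfter, List.head?_drop]
  rcases lt_or_ge ρ.edges.length lam.edges.length with hlt | hge
  · simp [List.getElem?_eq_getElem hlt, h.r_getElem_length hlt]
  · simp [List.getElem?_eq_none hge]

theorem Extends.of_tailAfter {μ ν ρ : FinPath G} (hμ : μ.Extends ρ) (hν : ν.Extends ρ)
    {v w : G.V} (h : (μ.tailAfter ρ.edges.length v).Extends (ν.tailAfter ρ.edges.length w)) :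
    μ.Extends ν := by
  refine ⟨hμ.1.trans hν.1.symm, ?_⟩
  rw [← List.prefix_iff_eq_append.1 hμ.2, ← List.prefix_iff_eq_append.1 hν.2]
  exact (List.prefix_append_right_inj _).2 h.2

theorem HasCommonExtension.of_tailAfter {μ ν ρ : FinPath G} (hμ : μ.Extends ρ)
    (hν : ν.Extends ρ) {v w : G.V}
    (h : (μ.tailAfter ρ.edges.length v).HasCommonExtension (ν.tailAfter ρ.edges.length w)) :
    μ.HasCommonExtension ν :=
  h.imp (Extends.of_tailAfter hμ hν) (Extends.of_tailAfter hν hμ)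

def snoc (μ : FinPath G) (e : G.E) (he : G.r e = μ.source) : FinPath G where
  vtx := μ.vtx
  edges := μ.edges ++ [e]
  chain := μ.chain.append (List.isChain_singleton e) fun f hf g hg => by
    obtain rfl : e = g := by simpa using hg
    have hne : μ.edges ≠ [] := by rintro h; simp [h] at hf
    obtain rfl : μ.edges.getLast hne = f := by
      simpa [List.getLast?_eq_some_getLast hne] using hf
    rw [he, source_eq_s_getLast hne]
  hv f hf := by
    rcases eq_or_ne μ.edges [] with hμ | hμ
    · obtain rfl : e = f := by simpa [hμ] using hf
      rw [he, source_of_edges_eq_nil hμ]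
    · exact μ.hv f (by simpa [List.head?_append, List.head?_eq_some_head hμ] using hf)

theorem snoc_extends (μ : FinPath G) (e : G.E) (he : G.r e = μ.source) :
    (μ.snoc e he).Extends μ :=
  ⟨rfl, List.prefix_append _ _⟩

end FinPath

namespace InfPath

def take (y : InfPath G) (N : ℕ) : FinPath G where
  vtx := y.range
  edges := List.ofFn fun i : Fin N => y.edge i
  chain := List.isChain_iff_getElem.2 fun i hi => by simpa using y.chain i
  hv e he := by
    cases N with
    | zero => simp at he
    | succ N =>
      obtain rfl : y.edge 0 = e := by simpa [List.ofFn_succ] using he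
      rfl

theorem length_take (y : InfPath G) (N : ℕ) : (y.take N).length = N := by
  simp [take, FinPath.length]

theorem Extends.take_extends {y : InfPath G} {ν : FinPath G} (h : y.Extends ν) {N : ℕ}
    (hN : ν.length ≤ N) : (y.take N).Extends ν := by
  refine ⟨?_, List.prefix_iff_getElem.2
    ⟨by simpa [take, FinPath.length] using hN, fun i hi => ?_⟩⟩
  · rcases eq_or_ne ν.edges [] with hν | hν
    · exact h.1 hν
    · have := h.2 0 (List.length_pos_iff.2 hν)
      simp only [List.get_eq_getElem] at this
      rw [FinPath.vtx_eq_r_head hν, List.head_eq_getElem, ← this]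
      rfl
  · simpa [take] using (h.2 i hi).symm

theorem extends_of_take_extends {y : InfPath G} {ν : FinPath G} {N : ℕ}
    (h : (y.take N).Extends ν) : y.Extends ν := by
  refine ⟨fun _ => h.1, fun i hi => ?_⟩
  simpa [take] using (h.2.getElem hi).symm

theorem exists_extends_forall_not_hasCommonExtension {y : InfPath G} {ρ : FinPath G}
    (hρ : y.Extends ρ) (S : Finset (FinPath G)) (hS : ∀ σ ∈ S, ¬ y.Extends σ) :
    ∃ lam : FinPath G, lam.Extends ρ ∧ ∀ σ ∈ S, ¬ lam.HasCommonExtension σ := by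
  set N := max ρ.length (S.sup FinPath.length) + 1
  refine ⟨y.take N, hρ.take_extends (by omega), fun σ hσ => ?_⟩
  rintro (h | h)
  · exact hS σ hσ (extends_of_take_extends h)
  · have hlen : (y.take N).length ≤ σ.length := h.2.length_le
    have : σ.length ≤ S.sup FinPath.length := Finset.le_sup hσ
    rw [length_take] at hlen
    omega

end InfPath

namespace FinPath

theorem not_hasCommonExtension_of_source_notMem_range {μ σ : FinPath G}
    (hμ : μ.source ∉ Set.range G.r) (hσ : ¬ μ.Extends σ) : ¬ μ.HasCommonExtension σ := by
  rintro (h | h)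
  · exact hσ h
  · rcases lt_or_ge μ.edges.length σ.edges.length with hlt | hge
    · exact hμ ⟨_, h.r_getElem_length hlt⟩
    · exact hσ (h.eq_of_length_le hge ▸ Extends.refl μ)

theorem exists_snoc_forall_not_hasCommonExtension {μ : FinPath G}
    (hμ : (G.r ⁻¹' {μ.source}).Infinite) (S : Finset (FinPath G))
    (hS : ∀ σ ∈ S, ¬ μ.Extends σ) :
    ∃ e he, ∀ σ ∈ S, ¬ (μ.snoc e he).HasCommonExtension σ := by
  classical
  obtain ⟨e, he, heS⟩ := hμ.exists_notMem_finset (S.biUnion fun σ => σ.edges.toFinset)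
  have he_not_mem : ∀ σ ∈ S, e ∉ σ.edges := fun σ hσ heσ =>
    heS (Finset.mem_biUnion.2 ⟨σ, hσ, List.mem_toFinset.2 heσ⟩)
  refine ⟨e, he, fun σ hσ => ?_⟩
  rintro (h | h)
  · rcases List.prefix_concat_iff.1 h.2 with heq | hpre
    · exact he_not_mem σ hσ (by simp [heq])
    · exact hS σ hσ ⟨h.1, hpre⟩
  · exact he_not_mem σ hσ (h.2.subset (by simp [snoc]))

theorem exists_extends_forall_not_hasCommonExtension_of_singular {μ : FinPath G}
    (hμ : Singular G μ.source) (S : Finset (FinPath G)) (hS : ∀ σ ∈ S, ¬ μ.Extends σ) :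
    ∃ lam : FinPath G, lam.Extends μ ∧ ∀ σ ∈ S, ¬ lam.HasCommonExtension σ := by
  rcases hμ with hempty | hinf
  · have hsrc : μ.source ∉ Set.range G.r := fun ⟨e, he⟩ =>
      Set.eq_empty_iff_forall_notMem.1 hempty e he
    exact ⟨μ, Extends.refl μ, fun σ hσ =>
      not_hasCommonExtension_of_source_notMem_range hsrc (hS σ hσ)⟩
  · obtain ⟨e, he, h⟩ := exists_snoc_forall_not_hasCommonExtension hinf S hS
    exact ⟨μ.snoc e he, snoc_extends μ e he, h⟩

end FinPath

theorem exists_extends_forall_not_hasCommonExtension {x : PathSpace G}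
    (hx : x ∈ BoundaryPaths G) {ρ : FinPath G} (hρ : x ∈ Cyl ρ) (S : Finset (FinPath G))
    (hS : ∀ σ ∈ S, x ∉ Cyl σ) :
    ∃ lam : FinPath G, lam.Extends ρ ∧ ∀ σ ∈ S, ¬ lam.HasCommonExtension σ := by
  cases x with
  | inl μ =>
    obtain ⟨lam, hlam, h⟩ :=
      FinPath.exists_extends_forall_not_hasCommonExtension_of_singular hx S hS
    exact ⟨lam, hlam.trans hρ, h⟩
  | inr y => exact y.exists_extends_forall_not_hasCommonExtension hρ S hS

end DirectedGraph

open DirectedGraph in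
theorem exists_path_no_common_extension_general (G : DirectedGraph)
    (x : PathSpace G) (hx : x ∈ BoundaryPaths G) (F : Finset (FinPath G))
    (rho : FinPath G) (hrhox : x ∈ Cyl rho)
    (hmax : ∀ sig ∈ F, x ∈ Cyl sig → sig.length ≤ rho.length) :
    ∃ nu : FinPath G, nu.range = rho.source ∧
      ∀ sig ∈ F, sig ≠ rho → sig.Extends rho →
        ¬ (nu.Extends (sig.tailAfter rho.edges.length rho.source) ∨
           (sig.tailAfter rho.edges.length rho.source).Extends nu) := by
  classical
  set S := F.filter fun sig => sig ≠ rho ∧ sig.Extends rho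
  have hS : ∀ sig ∈ S, x ∉ Cyl sig := by
    simp only [S, Finset.mem_filter]
    rintro sig ⟨hsigF, hne, hext⟩ hx_sig
    exact hne (hext.eq_of_length_le (hmax sig hsigF hx_sig))
  obtain ⟨lam, hlam, hlamS⟩ := exists_extends_forall_not_hasCommonExtension hx hrhox S hS
  refine ⟨lam.tailAfter rho.edges.length rho.source, FinPath.range_tailAfter hlam,
    fun sig hsigF hne hext h => ?_⟩
  exact hlamS sig (Finset.mem_filter.2 ⟨hsigF, hne, hext⟩)
    (FinPath.HasCommonExtension.of_tailAfter hlam hext h)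

open DirectedGraph in
/-- with rho = x(0,n) a longest initial segment of the boundary path x
lying in F, and F_x the set of tails (after rho) of the proper extensions of rho lying
in F, there is a path nu with range s(rho) having no common extension with any path in
F_x (provided s(rho) receives an edge). -/
theorem exists_path_no_common_extension (G : DirectedGraph)
    (x : PathSpace G) (hx : x ∈ BoundaryPaths G) (F : Finset (FinPath G))
    (rho : FinPath G) (hrhoF : rho ∈ F) (hrhox : x ∈ Cyl rho)
    (hmax : ∀ sig ∈ F, x ∈ Cyl sig → sig.length ≤ rho.length)
    (hne : ∃ e : G.E, G.r e = rho.source) :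
    ∃ nu : FinPath G, nu.range = rho.source ∧
      ∀ sig ∈ F, sig ≠ rho → sig.Extends rho →
        ¬ (nu.Extends (sig.tailAfter rho.edges.length rho.source) ∨
           (sig.tailAfter rho.edges.length rho.source).Extends nu) :=
  exists_path_no_common_extension_general G x hx F rho hrhox hmax
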